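/- Let v0 = −x1^2x2x3 + x2^2x3x4 + x1x3x4^2, v1 = x1x2^3 − x2x3^3 + x1x4^3, v2 = −x1^3x2 + x3^3x4 + x2x4^3, v3 = x1^2x2x3 − x2^2x3x4 − x1x3x4^2, v4 = x1x3^3 − x1^3x4 − x2^3x4 in ℂ[x1,...,x4]. Then the row vector (v0,v1,v2,v3,v4) multiplied by the matrix T is identically zero: (v0,...,v4)·T = 0 in ℂ[x1,...,x4]^5. Moreover, for every point x ∈ ℂ^4 with rank(T(x)) = 4, the vector (v0(x),...,v4(x)) is nonzero, and hence spans the one-dimensional kernel of T(x). (These quartics, which satisfy v0 = −v3, define the map Θ : P^3 ∖ D1 → P^4 sending a point to the unique Heisenberg subrepresentation of quadrics through it.) -/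
import Mathlib

open MvPolynomial Matrix

/-- The 5×5 alternating matrix `T` of quadrics in `x1,…,x4`
(here `X 0 = x1, …, X 3 = x4`). -/
noncomputable def matrixTPoly : Matrix (Fin 5) (Fin 5) (MvPolynomial (Fin 4) ℂ) :=
  !![0, X 0 ^ 2, X 1 ^ 2, X 2 ^ 2, X 3 ^ 2;
     -(X 0 ^ 2), 0, X 0 * X 2, X 1 * X 3, -(X 2 * X 3);
     -(X 1 ^ 2), -(X 0 * X 2), 0, -(X 0 * X 3), -(X 1 * X 2);
     -(X 2 ^ 2), -(X 1 * X 3), X 0 * X 3, 0, -(X 0 * X 1);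
     -(X 3 ^ 2), X 2 * X 3, X 1 * X 2, X 0 * X 1, 0]

/-- The vector of quartics `(v0, v1, v2, v3, v4)` defining the map `Θ`. -/
noncomputable def thetaVec : Fin 5 → MvPolynomial (Fin 4) ℂ :=
  ![-(X 0 ^ 2 * X 1 * X 2) + X 1 ^ 2 * X 2 * X 3 + X 0 * X 2 * X 3 ^ 2,
    X 0 * X 1 ^ 3 - X 1 * X 2 ^ 3 + X 0 * X 3 ^ 3,
    -(X 0 ^ 3 * X 1) + X 2 ^ 3 * X 3 + X 1 * X 3 ^ 3,
    X 0 ^ 2 * X 1 * X 2 - X 1 ^ 2 * X 2 * X 3 - X 0 * X 2 * X 3 ^ 2,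
    X 0 * X 2 ^ 3 - X 0 ^ 3 * X 3 - X 1 ^ 3 * X 3]

section Aux

open Finset Function

/-- `thetaVec` annihilates `matrixTPoly` from the left. -/
lemma thetaVec_ann : Matrix.vecMul thetaVec matrixTPoly = 0 := by
  funext j
  fin_cases j <;>
    · simp [vecMul, dotProduct, Fin.sum_univ_five, matrixTPoly, thetaVec]
      ring

/-- `matrixTPoly` is skew-symmetric. -/
lemma matrixTPoly_skew : matrixTPolyᵀ = -matrixTPoly := by
  funext i j
  fin_cases i <;> fin_cases j <;> simp [matrixTPoly]

section FinLits
lemma sa30 : Fin.succAbove (0:Fin 3) (0:Fin 2) = 1 := by decide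
lemma sa31 : Fin.succAbove (0:Fin 3) (1:Fin 2) = 2 := by decide
lemma sa32 : Fin.succAbove (1:Fin 3) (0:Fin 2) = 0 := by decide
lemma sa33 : Fin.succAbove (1:Fin 3) (1:Fin 2) = 2 := by decide
lemma sa34 : Fin.succAbove (2:Fin 3) (0:Fin 2) = 0 := by decide
lemma sa35 : Fin.succAbove (2:Fin 3) (1:Fin 2) = 1 := by decide
lemma sa40 : Fin.succAbove (0:Fin 4) (0:Fin 3) = 1 := by decide
lemma sa41 : Fin.succAbove (0:Fin 4) (1:Fin 3) = 2 := by decide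
lemma sa42 : Fin.succAbove (0:Fin 4) (2:Fin 3) = 3 := by decide
lemma sa43 : Fin.succAbove (1:Fin 4) (0:Fin 3) = 0 := by decide
lemma sa44 : Fin.succAbove (1:Fin 4) (1:Fin 3) = 2 := by decide
lemma sa45 : Fin.succAbove (1:Fin 4) (2:Fin 3) = 3 := by decide
lemma sa46 : Fin.succAbove (2:Fin 4) (0:Fin 3) = 0 := by decide
lemma sa47 : Fin.succAbove (2:Fin 4) (1:Fin 3) = 1 := by decide
lemma sa48 : Fin.succAbove (2:Fin 4) (2:Fin 3) = 3 := by decide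
lemma sa49 : Fin.succAbove (3:Fin 4) (0:Fin 3) = 0 := by decide
lemma sa4a : Fin.succAbove (3:Fin 4) (1:Fin 3) = 1 := by decide
lemma sa4b : Fin.succAbove (3:Fin 4) (2:Fin 3) = 2 := by decide
lemma fs20 : Fin.succ (0:Fin 2) = 1 := by decide
lemma fs21 : Fin.succ (1:Fin 2) = 2 := by decide
lemma fs30 : Fin.succ (0:Fin 3) = 1 := by decide
lemma fs31 : Fin.succ (1:Fin 3) = 2 := by decide
lemma fs32 : Fin.succ (2:Fin 3) = 3 := by decide
lemma fc20 : Fin.castSucc (0:Fin 2) = 0 := by decide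
lemma fc21 : Fin.castSucc (1:Fin 2) = 1 := by decide
lemma fc30 : Fin.castSucc (0:Fin 3) = 0 := by decide
lemma fc31 : Fin.castSucc (1:Fin 3) = 1 := by decide
lemma fc32 : Fin.castSucc (2:Fin 3) = 2 := by decide
lemma sa500 : Fin.succAbove (0:Fin 5) (0:Fin 4) = 1 := by decide
lemma sa501 : Fin.succAbove (0:Fin 5) (1:Fin 4) = 2 := by decide
lemma sa502 : Fin.succAbove (0:Fin 5) (2:Fin 4) = 3 := by decide
lemma sa503 : Fin.succAbove (0:Fin 5) (3:Fin 4) = 4 := by decide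
lemma sa510 : Fin.succAbove (1:Fin 5) (0:Fin 4) = 0 := by decide
lemma sa511 : Fin.succAbove (1:Fin 5) (1:Fin 4) = 2 := by decide
lemma sa512 : Fin.succAbove (1:Fin 5) (2:Fin 4) = 3 := by decide
lemma sa513 : Fin.succAbove (1:Fin 5) (3:Fin 4) = 4 := by decide
lemma sa520 : Fin.succAbove (2:Fin 5) (0:Fin 4) = 0 := by decide
lemma sa521 : Fin.succAbove (2:Fin 5) (1:Fin 4) = 1 := by decide
lemma sa522 : Fin.succAbove (2:Fin 5) (2:Fin 4) = 3 := by decide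
lemma sa523 : Fin.succAbove (2:Fin 5) (3:Fin 4) = 4 := by decide
lemma sa530 : Fin.succAbove (3:Fin 5) (0:Fin 4) = 0 := by decide
lemma sa531 : Fin.succAbove (3:Fin 5) (1:Fin 4) = 1 := by decide
lemma sa532 : Fin.succAbove (3:Fin 5) (2:Fin 4) = 2 := by decide
lemma sa533 : Fin.succAbove (3:Fin 5) (3:Fin 4) = 4 := by decide
lemma sa540 : Fin.succAbove (4:Fin 5) (0:Fin 4) = 0 := by decide
lemma sa541 : Fin.succAbove (4:Fin 5) (1:Fin 4) = 1 := by decide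
lemma sa542 : Fin.succAbove (4:Fin 5) (2:Fin 4) = 2 := by decide
lemma sa543 : Fin.succAbove (4:Fin 5) (3:Fin 4) = 3 := by decide
end FinLits

/-- Fully expanded determinant of a 4×4 matrix. -/
lemma det_fin_four' {R : Type*} [CommRing R] (M : Matrix (Fin 4) (Fin 4) R) :
    M.det =
      M 0 0 * (M 1 1 * (M 2 2 * M 3 3 - M 2 3 * M 3 2) - M 1 2 * (M 2 1 * M 3 3 - M 2 3 * M 3 1)
        + M 1 3 * (M 2 1 * M 3 2 - M 2 2 * M 3 1))
      - M 0 1 * (M 1 0 * (M 2 2 * M 3 3 - M 2 3 * M 3 2) - M 1 2 * (M 2 0 * M 3 3 - M 2 3 * M 3 0)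
        + M 1 3 * (M 2 0 * M 3 2 - M 2 2 * M 3 0))
      + M 0 2 * (M 1 0 * (M 2 1 * M 3 3 - M 2 3 * M 3 1) - M 1 1 * (M 2 0 * M 3 3 - M 2 3 * M 3 0)
        + M 1 3 * (M 2 0 * M 3 1 - M 2 1 * M 3 0))
      - M 0 3 * (M 1 0 * (M 2 1 * M 3 2 - M 2 2 * M 3 1) - M 1 1 * (M 2 0 * M 3 2 - M 2 2 * M 3 0)
        + M 1 2 * (M 2 0 * M 3 1 - M 2 1 * M 3 0)) := by
  simp only [Matrix.det_succ_row_zero, ← Nat.not_even_iff_odd, submatrix_apply,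
    Fin.succ_zero_eq_one, submatrix_submatrix, Matrix.det_unique, Fin.default_eq_zero,
    Function.comp_apply, Fin.succ_one_eq_two, Fin.sum_univ_succ, Fin.val_zero, Fin.zero_succAbove,
    Finset.univ_unique, Fin.val_succ, Fin.val_eq_zero, Fin.succ_succAbove_zero,
    Finset.sum_singleton, Fin.succ_succAbove_one, Even.add_self,
    sa30, sa31, sa32, sa33, sa34, sa35, sa40, sa41, sa42, sa43, sa44, sa45, sa46, sa47, sa48,
    sa49, sa4a, sa4b, fs20, fs21, fs30, fs31, fs32, fc20, fc21, fc30, fc31, fc32]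
  norm_num
  ring

lemma adjDiagLit (i : Fin 5) (hi : i = 0 ∨ i = 1 ∨ i = 2 ∨ i = 3 ∨ i = 4) :
    det (matrixTPoly.submatrix i.succAbove i.succAbove) = thetaVec i ^ 2 := by
  rcases hi with h|h|h|h|h <;> subst h <;>
    · rw [det_fin_four']
      simp only [submatrix_apply, sa500, sa501, sa502, sa503, sa510, sa511, sa512, sa513,
        sa520, sa521, sa522, sa523, sa530, sa531, sa532, sa533, sa540, sa541, sa542, sa543,
        matrixTPoly, thetaVec, Matrix.cons_val', Matrix.cons_val_zero, Matrix.cons_val_one,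
        Matrix.head_cons, Matrix.empty_val', Matrix.cons_val_fin_one, Matrix.head_fin_const,
        Matrix.cons_val_two, Matrix.cons_val_three, Matrix.tail_cons, Matrix.cons_val_four,
        Matrix.of_apply]
      ring

/-- The principal 4×4 minor of `matrixTPoly` obtained by deleting row and column `i`
equals `thetaVec i ^ 2`. -/
lemma adjDiag (i : Fin 5) :
    det (matrixTPoly.submatrix i.succAbove i.succAbove) = thetaVec i ^ 2 := by
  apply adjDiagLit; fin_cases i <;> simp

end Aux

/-- The row vector `(v0,…,v4)` annihilates `T` identically; moreover at every point
`x` where `T(x)` has rank 4, the evaluated vector is nonzero and spans the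
(one-dimensional) kernel of `T(x)`. -/
theorem thetaVec_vecMul_matrixTPoly :
    Matrix.vecMul thetaVec matrixTPoly = 0 ∧
    ∀ x : Fin 4 → ℂ, (matrixTPoly.map (eval x)).rank = 4 →
      (fun i => eval x (thetaVec i)) ≠ 0 ∧
      ∀ u : Fin 5 → ℂ,
        Matrix.vecMul u (matrixTPoly.map (eval x)) = 0 ↔
          ∃ c : ℂ, u = c • fun i => eval x (thetaVec i) := by
  refine ⟨thetaVec_ann, fun x hrank => ?_⟩
  set A : Matrix (Fin 5) (Fin 5) ℂ := matrixTPoly.map (eval x) with hA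
  set w : Fin 5 → ℂ := fun i => eval x (thetaVec i) with hw
  -- A is skew-symmetric
  have hAT : Aᵀ = -A := by
    funext i j
    have h := congrArg (eval x) (congrFun (congrFun matrixTPoly_skew i) j)
    simpa [hA, Matrix.transpose_apply, Matrix.map_apply] using h
  -- w is in the left kernel of A
  have hwA : w ᵥ* A = 0 := by
    funext j
    have h := congrArg (eval x) (congrFun thetaVec_ann j)
    simpa [hA, hw, vecMul, dotProduct, map_sum] using h
  -- left kernel and right kernel of A coincide
  have hlr : ∀ u : Fin 5 → ℂ, u ᵥ* A = 0 ↔ A *ᵥ u = 0 := by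
    intro u
    have h1 : A *ᵥ u = -(u ᵥ* A) := by
      rw [← Matrix.vecMul_transpose, hAT, Matrix.vecMul_neg]
    constructor
    · intro h; rw [h1, h, neg_zero]
    · intro h; rw [h1, neg_eq_zero] at h; exact h
  -- the (right) kernel of A is one-dimensional
  set K := LinearMap.ker A.mulVecLin with hK
  have hKone : Module.finrank ℂ K = 1 := by
    have h5 := LinearMap.finrank_range_add_finrank_ker A.mulVecLin
    have hr : Module.finrank ℂ (LinearMap.range A.mulVecLin) = 4 := hrank
    rw [hr, Module.finrank_fintype_fun_eq_card, Fintype.card_fin] at h5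
    rw [hK]
    omega
  -- a nonzero kernel vector
  have hKne : K ≠ ⊥ := by
    intro h
    rw [h, finrank_bot] at hKone
    exact one_ne_zero hKone.symm
  obtain ⟨w', hw'K, hw'ne⟩ := K.ne_bot_iff.mp hKne
  have hKspan : (ℂ ∙ w') = K := by
    apply Submodule.eq_of_le_of_finrank_le
    · rwa [Submodule.span_singleton_le_iff_mem]
    · rw [hKone, finrank_span_singleton hw'ne]
  obtain ⟨j0, hj0⟩ := Function.ne_iff.mp hw'ne
  have hj0' : w' j0 ≠ 0 := hj0
  -- the principal minor at j0 is nonzero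
  have hminor : det (A.submatrix j0.succAbove j0.succAbove) ≠ 0 := by
    intro hdet
    obtain ⟨xx, hxxne, hxx⟩ := Matrix.exists_mulVec_eq_zero_iff.mpr hdet
    set y : Fin 5 → ℂ := j0.insertNth 0 xx with hy
    have hysa : ∀ k, y (j0.succAbove k) = xx k := by
      intro k
      simp [hy]
    have hyj0 : y j0 = 0 := by simp [hy]
    have hy1 : ∀ k, (A *ᵥ y) (j0.succAbove k) = 0 := by
      intro k
      have := congrFun hxx k
      simp only [Matrix.mulVec, dotProduct] at this ⊢
      rw [Fin.sum_univ_succAbove (fun j => A (j0.succAbove k) j * y j) j0, hyj0, mul_zero,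
        zero_add]
      simpa [Matrix.submatrix_apply, hysa] using this
    have hw'A : w' ᵥ* A = 0 := (hlr w').mpr hw'K
    have hdot : w' ⬝ᵥ (A *ᵥ y) = 0 := by
      rw [Matrix.dotProduct_mulVec, hw'A, zero_dotProduct]
    have ht : (A *ᵥ y) j0 = 0 := by
      have hexp : w' ⬝ᵥ (A *ᵥ y) = w' j0 * (A *ᵥ y) j0 := by
        rw [dotProduct, Fin.sum_univ_succAbove (fun i => w' i * (A *ᵥ y) i) j0]
        simp [hy1]
      rw [hexp] at hdot
      exact (mul_eq_zero.mp hdot).resolve_left hj0'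
    have hyker : A *ᵥ y = 0 := by
      funext i
      exact Fin.succAboveCases j0 ht hy1 i
    have hymem : y ∈ K := by
      rw [hK, LinearMap.mem_ker]
      exact hyker
    rw [← hKspan, Submodule.mem_span_singleton] at hymem
    obtain ⟨c, hc⟩ := hymem
    have hc0 : c = 0 := by
      have := congrFun hc j0
      rw [hyj0] at this
      simp only [Pi.smul_apply, smul_eq_mul] at this
      exact (mul_eq_zero.mp this).resolve_right hj0'
    apply hxxne
    funext k
    have := congrFun hc (j0.succAbove k)
    rw [hysa k] at this
    rw [hc0] at this
    simpa using this.symm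
  -- hence w j0 ≠ 0
  have hwj0 : w j0 ≠ 0 := by
    intro h0
    apply hminor
    have hsub : A.submatrix j0.succAbove j0.succAbove
        = (matrixTPoly.submatrix j0.succAbove j0.succAbove).map (eval x) := rfl
    rw [hsub, ← RingHom.mapMatrix_apply, ← RingHom.map_det, adjDiag j0]
    rw [map_pow]
    change (w j0) ^ 2 = 0
    rw [h0]
    ring
  have hwne : w ≠ 0 := by
    intro h0
    exact hwj0 (by rw [h0]; rfl)
  -- w spans the kernel
  have hwK : w ∈ K := by
    rw [hK, LinearMap.mem_ker, Matrix.mulVecLin_apply]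
    exact (hlr w).mp hwA
  have hKspanW : (ℂ ∙ w) = K := by
    apply Submodule.eq_of_le_of_finrank_le
    · rwa [Submodule.span_singleton_le_iff_mem]
    · rw [hKone, finrank_span_singleton hwne]
  refine ⟨hwne, fun u => ?_⟩
  constructor
  · intro hu
    have huK : u ∈ K := by
      rw [hK, LinearMap.mem_ker, Matrix.mulVecLin_apply]
      exact (hlr u).mp hu
    rw [← hKspanW, Submodule.mem_span_singleton] at huK
    obtain ⟨c, hc⟩ := huK
    exact ⟨c, hc.symm⟩
  · rintro ⟨c, rfl⟩
    have : (c • w) ᵥ* A = c • (w ᵥ* A) := by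
      funext j
      simp [Matrix.vecMul, dotProduct, Finset.mul_sum, mul_assoc]
    rw [this, hwA, smul_zero]
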